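/- arXiv:0902.2150 — 5 statements merged into one kernel-verified Lean document; each statement's English description precedes it below -/
import Mathlib

section
/- Let H be a connected graph with girth at least 6 whose square G = H² is not a complete graph. Then for every vertex v of H with degree at least 2 in H, the closed neighborhood N_H[v] is a maximal clique in G. -/
open SimpleGraph

variable {V : Type*}

/-- The square of a graph: `x` and `y` are adjacent iff `1 ≤ d_H(x,y) ≤ 2`. -/
def graphSq (H : SimpleGraph V) : SimpleGraph V where
  Adj x y := x ≠ y ∧ (H.Adj x y ∨ ∃ z, H.Adj x z ∧ H.Adj z y)
  symm := by
    constructor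
    rintro x y ⟨hxy, h | ⟨z, h1, h2⟩⟩
    · exact ⟨hxy.symm, Or.inl h.symm⟩
    · exact ⟨hxy.symm, Or.inr ⟨z, h2.symm, h1.symm⟩⟩
  loopless := ⟨fun x h => h.1 rfl⟩

/-- `Q` is a maximal clique of `G`. -/
def IsMaxClique (G : SimpleGraph V) (Q : Set V) : Prop :=
  G.IsClique Q ∧ ∀ R : Set V, G.IsClique R → Q ⊆ R → R = Q

/-- `xy` is a forced edge of `G`: it lies in at least two distinct maximal cliques. -/
def Forced (G : SimpleGraph V) (x y : V) : Prop :=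
  G.Adj x y ∧ ∃ Q₁ Q₂ : Set V, Q₁ ≠ Q₂ ∧ IsMaxClique G Q₁ ∧ IsMaxClique G Q₂ ∧
    x ∈ Q₁ ∧ y ∈ Q₁ ∧ x ∈ Q₂ ∧ y ∈ Q₂

/-- The subgraph of `G` consisting of all forced edges. -/
def forcedSubgraph (G : SimpleGraph V) : SimpleGraph V where
  Adj := Forced G
  symm := by
    constructor
    rintro x y ⟨hadj, Q₁, Q₂, hne, h1, h2, hx1, hy1, hx2, hy2⟩
    exact ⟨hadj.symm, Q₁, Q₂, hne, h1, h2, hy1, hx1, hy2, hx2⟩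
  loopless := ⟨fun x h => h.1.ne rfl⟩

/-- `H` contains no cycle of length 3 and no cycle of length 5. -/
def C3C5Free (H : SimpleGraph V) : Prop :=
  ∀ (v : V) (w : H.Walk v v), w.IsCycle → w.length ≠ 3 ∧ w.length ≠ 5

/-- The set `S` induces a star in `F`: at least two vertices, a center adjacent to
all others, and the non-center vertices pairwise non-adjacent. -/
def IsStarOn (F : SimpleGraph V) (S : Set V) : Prop :=
  S.Nontrivial ∧ ∃ c ∈ S, (∀ x ∈ S, x ≠ c → F.Adj c x) ∧
    ∀ x ∈ S, ∀ y ∈ S, x ≠ c → y ≠ c → x ≠ y → ¬ F.Adj x y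

/-!
Suppose a clique `R` of `H²` contains `N[v]` and a vertex `u ∉ N[v]`. Being adjacent to `v`
in `H²`, `u` is joined to `v` by a path `u z v`. Since `deg v ≥ 2`, `v` has a second neighbour
`w ≠ z`, and `u` must be within distance two of `w` as well; the resulting closed walk
through `u, z, v, w` is a triangle, a 4-cycle or a 5-cycle, all excluded by girth at least 6.
-/

namespace SimpleGraph

variable {H : SimpleGraph V}

lemma no_triangle_of_four_le_girth (hg : 4 ≤ H.girth) {a b c : V}
    (hab : H.Adj a b) (hbc : H.Adj b c) (hca : H.Adj c a) : False := by
  have hcyc : (Walk.cons hab (Walk.cons hbc (Walk.cons hca Walk.nil))).IsCycle := by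
    simp [Walk.isCycle_def, Walk.isTrail_def, hab.ne, hbc.ne, hca.ne, hab.ne', hca.ne']
  have := hg.trans (girth_le_length hcyc)
  simp at this

lemma no_square_of_five_le_girth (hg : 5 ≤ H.girth) {a b c d : V}
    (hac : a ≠ c) (hbd : b ≠ d)
    (hab : H.Adj a b) (hbc : H.Adj b c) (hcd : H.Adj c d) (hda : H.Adj d a) : False := by
  have hcyc : (Walk.cons hab (Walk.cons hbc (Walk.cons hcd (Walk.cons hda Walk.nil)))).IsCycle := by
    simp [Walk.isCycle_def, Walk.isTrail_def, hab.ne, hbc.ne, hcd.ne, hda.ne, hab.ne',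
      hda.ne', hac, hbd, hac.symm]
  have := hg.trans (girth_le_length hcyc)
  simp at this

lemma no_pentagon_of_six_le_girth (hg : 6 ≤ H.girth) {a b c d e : V}
    (hac : a ≠ c) (had : a ≠ d) (hbd : b ≠ d) (hbe : b ≠ e) (hce : c ≠ e)
    (hab : H.Adj a b) (hbc : H.Adj b c) (hcd : H.Adj c d) (hde : H.Adj d e)
    (hea : H.Adj e a) : False := by
  have hcyc : (Walk.cons hab (Walk.cons hbc (Walk.cons hcd (Walk.cons hde
      (Walk.cons hea Walk.nil))))).IsCycle := by
    simp [Walk.isCycle_def, Walk.isTrail_def, hab.ne, hbc.ne, hcd.ne, hde.ne, hea.ne,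
      hab.ne', hea.ne', hac, had, hbd, hbe, hce, hac.symm, had.symm]
  have := hg.trans (girth_le_length hcyc)
  simp at this

lemma isClique_graphSq_insert_neighborSet (v : V) :
    (graphSq H).IsClique (insert v (H.neighborSet v)) := by
  intro x hx y hy hxy
  refine ⟨hxy, ?_⟩
  simp only [Set.mem_insert_iff, mem_neighborSet] at hx hy
  rcases hx with rfl | hx <;> rcases hy with rfl | hy
  · exact absurd rfl hxy
  · exact Or.inl hy
  · exact Or.inl hx.symm
  · exact Or.inr ⟨v, hx.symm, hy⟩

lemma eq_of_graphSq_adj_of_six_le_girth (hg : 6 ≤ H.girth) {u z v w : V}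
    (huv : u ≠ v) (hvu : ¬ H.Adj v u) (huz : H.Adj u z) (hzv : H.Adj z v) (hvw : H.Adj v w)
    (huw : (graphSq H).Adj u w) : w = z := by
  by_contra hwz
  obtain ⟨huw, huw' | ⟨t, hut, htw⟩⟩ := huw
  · exact no_square_of_five_le_girth (by omega) huv (Ne.symm hwz) huz hzv hvw huw'.symm
  · obtain rfl | htv := eq_or_ne t v
    · exact hvu hut.symm
    obtain rfl | htz := eq_or_ne t z
    · exact no_triangle_of_four_le_girth (by omega) hzv hvw htw.symm
    exact no_pentagon_of_six_le_girth hg huv huw (Ne.symm hwz) (Ne.symm htz) (Ne.symm htv)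
      huz hzv hvw htw.symm hut.symm

end SimpleGraph

theorem stmt0_general [Fintype V] (H : SimpleGraph V) [DecidableRel H.Adj]
    (hgirth : 6 ≤ H.girth)
    (v : V) (hdeg : 2 ≤ H.degree v) :
    IsMaxClique (graphSq H) (insert v (H.neighborSet v)) := by
  refine ⟨isClique_graphSq_insert_neighborSet v, fun R hR hsub => ?_⟩
  refine Set.Subset.antisymm (fun u hu => ?_) hsub
  by_contra hun
  obtain ⟨huv, hvu⟩ : u ≠ v ∧ ¬ H.Adj v u := by simpa [not_or] using hun
  have hvR : v ∈ R := hsub (Set.mem_insert _ _)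
  obtain ⟨-, hvu' | ⟨z, huz, hzv⟩⟩ := hR hu hvR huv
  · exact hvu hvu'.symm
  obtain ⟨w, hvw, hwz⟩ := Finset.exists_mem_ne (hdeg : 1 < (H.neighborFinset v).card) z
  rw [mem_neighborFinset] at hvw
  have hwR : w ∈ R := hsub (Set.mem_insert_of_mem _ hvw)
  have huw : u ≠ w := fun h => hvu (h ▸ hvw)
  exact hwz (eq_of_graphSq_adj_of_six_le_girth hgirth huv hvu huz hzv hvw (hR hu hwR huw))

theorem stmt0 [Fintype V] (H : SimpleGraph V) [DecidableRel H.Adj]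
    (hconn : H.Connected) (hgirth : 6 ≤ H.girth) (hnc : graphSq H ≠ ⊤)
    (v : V) (hdeg : 2 ≤ H.degree v) :
    IsMaxClique (graphSq H) (insert v (H.neighborSet v)) :=
  stmt0_general H hgirth v hdeg
end

section
/- Let H be a connected graph with girth at least 7 whose square G = H² is not complete, and let F be the spanning subgraph of G consisting of all forced edges (edges lying in at least two distinct maximal cliques of G). Then F is equal to the graph obtained from H by deleting all vertices of degree 1 in H. -/
/-!
When `H` has girth at least 7, every clique of `H²` lies in a closed neighbourhood `N[v]`: two
of its vertices at distance two have a unique middle vertex `m`, and any further vertex outside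
`N[m]` would close a cycle of length at most 6. So the maximal cliques of `H²` are the `N[v]` with
`deg v ≥ 2` (the neighbourhood of a leaf sits inside that of its neighbour). A pair at distance
two lies only in `N[m]`, and an edge `xy` of `H` only in `N[x]` and `N[y]`, since `H` has no
triangles; hence the forced edges are the edges of `H` between vertices of degree at least 2.
A vertex of degree at least 2 all of whose neighbours are leaves makes the connected graph `H` a
star, whose square is complete.
-/

open SimpleGraph

variable {V : Type*}

namespace SimpleGraph

variable {H : SimpleGraph V}

lemma egirth_le_three {a b c : V} (hab : H.Adj a b) (hbc : H.Adj b c) (hca : H.Adj c a) :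
    H.egirth ≤ 3 :=
  egirth_le_length (w := .cons hab (.cons hbc (.cons hca .nil))) <| by
    simp [Walk.isCycle_def, Walk.isTrail_def, hab.ne, hbc.ne, hca.ne, hab.ne', hca.ne']

lemma egirth_le_four {a b c d : V} (hab : H.Adj a b) (hbc : H.Adj b c) (hcd : H.Adj c d)
    (hda : H.Adj d a) (hac : a ≠ c) (hbd : b ≠ d) : H.egirth ≤ 4 :=
  egirth_le_length (w := .cons hab (.cons hbc (.cons hcd (.cons hda .nil)))) <| by
    simp [Walk.isCycle_def, Walk.isTrail_def, hab.ne, hbc.ne, hcd.ne, hda.ne, hab.ne', hda.ne',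
      hac, hbd, hac.symm]

lemma egirth_le_five {a b c d e : V} (hab : H.Adj a b) (hbc : H.Adj b c) (hcd : H.Adj c d)
    (hde : H.Adj d e) (hea : H.Adj e a) (hac : a ≠ c) (had : a ≠ d) (hbd : b ≠ d)
    (hbe : b ≠ e) (hce : c ≠ e) : H.egirth ≤ 5 :=
  egirth_le_length (w := .cons hab (.cons hbc (.cons hcd (.cons hde (.cons hea .nil))))) <| by
    simp [Walk.isCycle_def, Walk.isTrail_def, hab.ne, hbc.ne, hcd.ne, hde.ne, hea.ne,
      hab.ne', hea.ne', hac, had, hbd, hbe, hce, hac.symm, had.symm]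

lemma egirth_le_six {a b c d e f : V} (hab : H.Adj a b) (hbc : H.Adj b c) (hcd : H.Adj c d)
    (hde : H.Adj d e) (hef : H.Adj e f) (hfa : H.Adj f a) (hac : a ≠ c) (had : a ≠ d)
    (hae : a ≠ e) (hbd : b ≠ d) (hbe : b ≠ e) (hbf : b ≠ f) (hce : c ≠ e) (hcf : c ≠ f)
    (hdf : d ≠ f) : H.egirth ≤ 6 :=
  egirth_le_length
    (w := .cons hab (.cons hbc (.cons hcd (.cons hde (.cons hef (.cons hfa .nil)))))) <| by
    simp [Walk.isCycle_def, Walk.isTrail_def, hab.ne, hbc.ne, hcd.ne, hde.ne, hef.ne, hfa.ne,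
      hab.ne', hfa.ne', hac, had, hae, hbd, hbe, hbf, hce, hcf, hdf, hac.symm, had.symm, hae.symm]

lemma subsingleton_commonNeighbors (hH : 5 ≤ H.egirth) {x y : V} (hxy : x ≠ y) :
    (H.commonNeighbors x y).Subsingleton := by
  rintro m ⟨hxm, hym⟩ p ⟨hxp, hyp⟩
  by_contra hmp
  exact (hH.trans (egirth_le_four hxm hym.symm hyp hxp.symm hxy hmp)).not_gt (by norm_num)

lemma eq_of_adj_of_adj_of_degree_le_one {x a b : V} [Fintype (H.neighborSet x)] (hx : H.degree x ≤ 1)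
    (ha : H.Adj x a) (hb : H.Adj x b) : a = b :=
  Finset.card_le_one.mp hx a (by simpa using ha) b (by simpa using hb)

def closedNbhd (H : SimpleGraph V) (v : V) : Set V := insert v (H.neighborSet v)

lemma self_mem_closedNbhd (v : V) : v ∈ H.closedNbhd v := Set.mem_insert v _

lemma mem_closedNbhd_of_adj {v u : V} (h : H.Adj v u) : u ∈ H.closedNbhd v :=
  Set.mem_insert_of_mem v h

lemma isClique_graphSq_closedNbhd (v : V) : (graphSq H).IsClique (H.closedNbhd v) := by
  rintro a (rfl | ha) b (rfl | hb) hab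
  · exact absurd rfl hab
  · exact ⟨hab, Or.inl hb⟩
  · exact ⟨hab, Or.inl ha.symm⟩
  · exact ⟨hab, Or.inr ⟨v, ha.symm, hb⟩⟩

lemma exists_mem_closedNbhd_adj_of_graphSq_adj {x z : V} (h : (graphSq H).Adj x z) :
    ∃ p ∈ H.closedNbhd x, H.Adj p z := by
  obtain ⟨-, hxz | ⟨p, hxp, hpz⟩⟩ := h
  · exact ⟨x, self_mem_closedNbhd x, hxz⟩
  · exact ⟨p, mem_closedNbhd_of_adj hxp, hpz⟩

lemma subset_closedNbhd_of_adj_of_adj (hH : 7 ≤ H.egirth) {Q : Set V}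
    (hQ : (graphSq H).IsClique Q) {x y m : V} (hx : x ∈ Q) (hy : y ∈ Q) (hxy : x ≠ y)
    (hnxy : ¬H.Adj x y) (hxm : H.Adj x m) (hmy : H.Adj m y) : Q ⊆ H.closedNbhd m := by
  intro z hz
  by_cases hzx : z = x
  · exact hzx ▸ mem_closedNbhd_of_adj hxm.symm
  by_cases hzy : z = y
  · exact hzy ▸ mem_closedNbhd_of_adj hmy
  by_cases hzm : z = m
  · exact hzm ▸ self_mem_closedNbhd z
  obtain ⟨p, hp, hpz⟩ := exists_mem_closedNbhd_adj_of_graphSq_adj (hQ hx hz (Ne.symm hzx))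
  obtain ⟨q, hq, hqz⟩ := exists_mem_closedNbhd_adj_of_graphSq_adj (hQ hy hz (Ne.symm hzy))
  by_cases hpm : p = m
  · exact mem_closedNbhd_of_adj (hpm ▸ hpz)
  by_cases hqm : q = m
  · exact mem_closedNbhd_of_adj (hqm ▸ hqz)
  -- Otherwise `x m y q z p` closes up into a cycle of length at most 6.
  have short {k : ℕ∞} (hk : k < 7) (h : H.egirth ≤ k) : False := (hH.trans h).not_gt hk
  exfalso
  rcases hp with hpx | hxp <;> rcases hq with hqy | hyq
  · subst p q
    exact short (by norm_num) (egirth_le_four hxm hmy hqz hpz.symm hxy (Ne.symm hzm))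
  · subst p
    have hqx : q ≠ x := fun h => hnxy (h ▸ hyq).symm
    exact short (by norm_num) (egirth_le_five hxm hmy hyq hqz hpz.symm hxy (Ne.symm hqx)
      (Ne.symm hqm) (Ne.symm hzm) (Ne.symm hzy))
  · subst q
    have hpy : p ≠ y := fun h => hnxy (h ▸ hxp)
    exact short (by norm_num) (egirth_le_five hmy.symm hxm.symm hxp hpz hqz.symm (Ne.symm hxy)
      (Ne.symm hpy) (Ne.symm hpm) (Ne.symm hzm) (Ne.symm hzx))
  · have hqx : q ≠ x := fun h => hnxy (h ▸ hyq).symm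
    have hpy : p ≠ y := fun h => hnxy (h ▸ hxp)
    have hqp : q ≠ p := fun h => hpm <|
      subsingleton_commonNeighbors (le_trans (by norm_num) hH) hxy ⟨hxp, h ▸ hyq⟩ ⟨hxm, hmy.symm⟩
    exact short (by norm_num) (egirth_le_six hxm hmy hyq hqz hpz.symm hxp.symm hxy (Ne.symm hqx)
      (Ne.symm hzx) (Ne.symm hqm) (Ne.symm hzm) (Ne.symm hpm) (Ne.symm hzy) (Ne.symm hpy) hqp)

lemma exists_subset_closedNbhd (hH : 7 ≤ H.egirth) {Q : Set V} (hQ : (graphSq H).IsClique Q)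
    {x : V} (hx : x ∈ Q) : ∃ v, Q ⊆ H.closedNbhd v := by
  by_cases hQx : Q ⊆ H.closedNbhd x
  · exact ⟨x, hQx⟩
  obtain ⟨y, hy, hyx⟩ := Set.not_subset.mp hQx
  have hxy : x ≠ y := fun h => hyx (h ▸ self_mem_closedNbhd x)
  obtain ⟨-, hadj | ⟨m, hxm, hmy⟩⟩ := hQ hx hy hxy
  · exact absurd (mem_closedNbhd_of_adj hadj) hyx
  · exact ⟨m, subset_closedNbhd_of_adj_of_adj hH hQ hx hy hxy
      (fun h => hyx (mem_closedNbhd_of_adj h)) hxm hmy⟩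

lemma eq_or_eq_of_adj_of_mem_closedNbhd (hH : 4 ≤ H.egirth) {v x y : V} (hxy : H.Adj x y)
    (hx : x ∈ H.closedNbhd v) (hy : y ∈ H.closedNbhd v) : v = x ∨ v = y := by
  rcases hx with hx | hvx
  · exact Or.inl hx.symm
  rcases hy with hy | hvy
  · exact Or.inr hy.symm
  exact ((hH.trans (egirth_le_three hvx hxy hvy.symm)).not_gt (by norm_num)).elim

lemma eq_of_not_adj_of_mem_closedNbhd (hH : 5 ≤ H.egirth) {v x y m : V} (hxy : x ≠ y)
    (hnxy : ¬H.Adj x y) (hxm : H.Adj x m) (hmy : H.Adj m y)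
    (hx : x ∈ H.closedNbhd v) (hy : y ∈ H.closedNbhd v) : v = m := by
  rcases hx with rfl | hvx
  · exact absurd (hy.resolve_left hxy.symm) hnxy
  rcases hy with rfl | hvy
  · exact absurd hvx.symm hnxy
  exact subsingleton_commonNeighbors hH hxy ⟨hvx.symm, hvy.symm⟩ ⟨hxm, hmy.symm⟩

lemma eq_of_closedNbhd_subset (hH : 4 ≤ H.egirth) {x v : V} [Fintype (H.neighborSet x)]
    (hdeg : 2 ≤ H.degree x) (h : H.closedNbhd x ⊆ H.closedNbhd v) : v = x := by
  obtain ⟨a, ha, b, hb, hab⟩ := Finset.one_lt_card.mp hdeg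
  rw [mem_neighborFinset] at ha hb
  by_contra hvx
  have hva := (eq_or_eq_of_adj_of_mem_closedNbhd hH ha (h (self_mem_closedNbhd x))
    (h (mem_closedNbhd_of_adj ha))).resolve_left hvx
  have hvb := (eq_or_eq_of_adj_of_mem_closedNbhd hH hb (h (self_mem_closedNbhd x))
    (h (mem_closedNbhd_of_adj hb))).resolve_left hvx
  exact hab (hva.symm.trans hvb)

lemma closedNbhd_subset_of_degree_le_one {x y : V} [Fintype (H.neighborSet x)]
    (hdeg : H.degree x ≤ 1) (hxy : H.Adj x y) : H.closedNbhd x ⊆ H.closedNbhd y := by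
  rintro u (rfl | hxu)
  · exact mem_closedNbhd_of_adj hxy.symm
  · exact eq_of_adj_of_adj_of_degree_le_one hdeg hxu hxy ▸ self_mem_closedNbhd u

lemma IsMaxClique.exists_eq_closedNbhd (hH : 7 ≤ H.egirth) {Q : Set V}
    (hQ : IsMaxClique (graphSq H) Q) {x : V} (hx : x ∈ Q) : ∃ v, Q = H.closedNbhd v :=
  let ⟨v, hv⟩ := exists_subset_closedNbhd hH hQ.1 hx
  ⟨v, (hQ.2 _ (isClique_graphSq_closedNbhd v) hv).symm⟩

lemma isMaxClique_closedNbhd (hH : 7 ≤ H.egirth) {x : V} [Fintype (H.neighborSet x)]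
    (hdeg : 2 ≤ H.degree x) : IsMaxClique (graphSq H) (H.closedNbhd x) := by
  refine ⟨isClique_graphSq_closedNbhd x, fun R hR hxR => ?_⟩
  obtain ⟨v, hRv⟩ := exists_subset_closedNbhd hH hR (hxR (self_mem_closedNbhd x))
  obtain rfl := eq_of_closedNbhd_subset (le_trans (by norm_num) hH) hdeg (hxR.trans hRv)
  exact hRv.antisymm hxR

lemma two_le_degree_of_isMaxClique {x y : V} [Fintype (H.neighborSet x)]
    (hmax : IsMaxClique (graphSq H) (H.closedNbhd x)) (hxy : H.Adj x y)
    (hne : H.closedNbhd x ≠ H.closedNbhd y) : 2 ≤ H.degree x := by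
  by_contra! hdeg
  exact hne (hmax.2 _ (isClique_graphSq_closedNbhd y)
    (closedNbhd_subset_of_degree_le_one (Nat.le_of_lt_succ hdeg) hxy)).symm

lemma forced_graphSq_iff (hH : 7 ≤ H.egirth) [H.LocallyFinite] (x y : V) :
    Forced (graphSq H) x y ↔ H.Adj x y ∧ 2 ≤ H.degree x ∧ 2 ≤ H.degree y := by
  constructor
  · rintro ⟨hxy, Q₁, Q₂, hne, hQ₁, hQ₂, hx₁, hy₁, hx₂, hy₂⟩
    obtain ⟨v₁, rfl⟩ := hQ₁.exists_eq_closedNbhd hH hx₁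
    obtain ⟨v₂, rfl⟩ := hQ₂.exists_eq_closedNbhd hH hx₂
    have hadj : H.Adj x y := by
      by_contra hnxy
      obtain ⟨m, hxm, hmy⟩ := hxy.2.resolve_left hnxy
      have h5 : 5 ≤ H.egirth := le_trans (by norm_num) hH
      exact hne (by rw [eq_of_not_adj_of_mem_closedNbhd h5 hxy.ne hnxy hxm hmy hx₁ hy₁,
        eq_of_not_adj_of_mem_closedNbhd h5 hxy.ne hnxy hxm hmy hx₂ hy₂])
    have h4 : 4 ≤ H.egirth := le_trans (by norm_num) hH
    rcases eq_or_eq_of_adj_of_mem_closedNbhd h4 hadj hx₁ hy₁ with rfl | rfl <;>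
      rcases eq_or_eq_of_adj_of_mem_closedNbhd h4 hadj hx₂ hy₂ with h₂ | h₂ <;> subst v₂
    · exact absurd rfl hne
    · exact ⟨hadj, two_le_degree_of_isMaxClique hQ₁ hadj hne,
        two_le_degree_of_isMaxClique hQ₂ hadj.symm hne.symm⟩
    · exact ⟨hadj, two_le_degree_of_isMaxClique hQ₂ hadj hne.symm,
        two_le_degree_of_isMaxClique hQ₁ hadj.symm hne⟩
    · exact absurd rfl hne
  · rintro ⟨hxy, hx, hy⟩
    refine ⟨⟨hxy.ne, Or.inl hxy⟩, _, _, fun h => hxy.ne ?_, isMaxClique_closedNbhd hH hx,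
      isMaxClique_closedNbhd hH hy, self_mem_closedNbhd x, mem_closedNbhd_of_adj hxy,
      mem_closedNbhd_of_adj hxy.symm, self_mem_closedNbhd y⟩
    exact (eq_of_closedNbhd_subset (le_trans (by norm_num) hH) hx h.subset).symm

lemma graphSq_eq_top_of_forall_adj_degree_le_one [H.LocallyFinite] (hconn : H.Connected)
    {v : V} (h : ∀ w, H.Adj v w → H.degree w ≤ 1) : graphSq H = ⊤ := by
  have hclosed {a b : V} (hab : H.Adj a b) (ha : a ∈ H.closedNbhd v) : b ∈ H.closedNbhd v := by
    rcases ha with rfl | hva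
    · exact mem_closedNbhd_of_adj hab
    · exact Or.inl (eq_of_adj_of_adj_of_degree_le_one (h a hva) hab hva.symm)
  have hall (u : V) : u ∈ H.closedNbhd v := by
    induction (reachable_iff_reflTransGen v u).mp (hconn.preconnected v u) with
    | refl => exact self_mem_closedNbhd v
    | tail _ hbc ih => exact hclosed hbc ih
  rw [← isClique_univ]
  exact (isClique_graphSq_closedNbhd v).subset fun u _ => hall u

lemma exists_adj_two_le_degree [H.LocallyFinite] (hconn : H.Connected) (hnc : graphSq H ≠ ⊤)
    (v : V) : ∃ w, H.Adj v w ∧ 2 ≤ H.degree w := by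
  by_contra! h
  exact hnc (graphSq_eq_top_of_forall_adj_degree_le_one hconn fun w hw =>
    Nat.le_of_lt_succ (h w hw))

end SimpleGraph

theorem stmt3 [Fintype V] (H : SimpleGraph V) [DecidableRel H.Adj]
    (hconn : H.Connected) (hgirth : 7 ≤ H.girth) (hnc : graphSq H ≠ ⊤) :
    (∀ x y : V, (forcedSubgraph (graphSq H)).Adj x y ↔
        (H.Adj x y ∧ 2 ≤ H.degree x ∧ 2 ≤ H.degree y)) ∧
    (forcedSubgraph (graphSq H)).support = {v : V | 2 ≤ H.degree v} := by
  have hH : 7 ≤ H.egirth :=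
    (ENat.natCast_le_natCast.mpr hgirth).trans H.egirth.natCast_toNat_le_self
  have hforced := forced_graphSq_iff hH
  refine ⟨hforced, Set.ext fun v => ⟨fun ⟨w, hvw⟩ => ((hforced v w).mp hvw).2.1, fun hv => ?_⟩⟩
  obtain ⟨w, hvw, hw⟩ := exists_adj_two_le_degree hconn hnc v
  exact ⟨w, (hforced v w).mpr ⟨hvw, hv, hw⟩⟩
end

section
/- Let H be a connected graph with girth at least 7 whose square G = H² is not complete, and let F be the subgraph of G formed by the forced edges. Then for every maximal clique Q of G, the induced subgraph F[Q ∩ V(F)] is a star (i.e., a graph with at least two vertices having a vertex adjacent to all others, the rest pairwise non-adjacent). -/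
/-
Girth at least 7 pins down the cliques of `H²`. If a clique contains two vertices `x ≠ y` with a
common neighbour `w`, it lies in the closed neighbourhood `N[w]`: a clique vertex outside `N[w]`
would close a cycle of length at most 6 through `x`, `w` and `y`. A clique without such a pair lies
in `N[x]` for any of its vertices `x`. So the maximal cliques of `H²` are the sets `N[c]` with
`deg c ≥ 2`; two of them share at most one vertex or one `H`-edge, and an edge `uv` of `H²` is
forced exactly when it is an edge of `H` whose endpoints both have degree at least 2. Inside
`N[c]` the forced edges are therefore the `H`-edges from `c` to its non-leaf neighbours, and there
is at least one such neighbour because `H²` is not complete; the leaves of the star are pairwise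
non-adjacent since `H` has no triangle.
-/

open SimpleGraph

variable {V : Type*}

namespace SimpleGraph

variable {H : SimpleGraph V} {a b c d e f u v w x y z : V}

def closedNeighborSet (H : SimpleGraph V) (c : V) : Set V := insert c (H.neighborSet c)

@[simp]
lemma mem_closedNeighborSet : x ∈ H.closedNeighborSet c ↔ x = c ∨ H.Adj c x := Iff.rfl

lemma self_mem_closedNeighborSet (c : V) : c ∈ H.closedNeighborSet c := Or.inl rfl

lemma isClique_closedNeighborSet (c : V) : (graphSq H).IsClique (H.closedNeighborSet c) := by
  rintro x (rfl | hx) y (rfl | hy) hne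
  · exact absurd rfl hne
  · exact ⟨hne, Or.inl hy⟩
  · exact ⟨hne, Or.inl hx.symm⟩
  · exact ⟨hne, Or.inr ⟨c, hx.symm, hy⟩⟩

lemma Connected.eq_univ_of_forall_adj_mem (hconn : H.Connected) {S : Set V} (hx : x ∈ S)
    (hS : ∀ ⦃y z⦄, y ∈ S → H.Adj y z → z ∈ S) : S = Set.univ := by
  refine Set.eq_univ_of_forall fun v => ?_
  obtain ⟨p⟩ := hconn x v
  induction p with
  | nil => exact hx
  | cons h _ ih => exact ih (hS hx h)

lemma false_of_triangle (hg : 4 ≤ H.egirth) (hab : H.Adj a b) (hbc : H.Adj b c)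
    (hca : H.Adj c a) : False := by
  have hcyc : (Walk.cons hab (.cons hbc (.cons hca .nil))).IsCycle := by
    simp [Walk.isCycle_def, Sym2.eq, Sym2.rel_iff']
    grind [Adj.ne]
  have := hg.trans (egirth_le_length hcyc)
  norm_num at this

lemma commonNeighbors_subsingleton (hg : 5 ≤ H.egirth) (hxy : x ≠ y) :
    (H.commonNeighbors x y).Subsingleton := by
  intro w hw w' hw'
  rw [mem_commonNeighbors] at hw hw'
  by_contra hne
  have hcyc : (Walk.cons hw.1.symm (.cons hw'.1 (.cons hw'.2.symm (.cons hw.2 .nil)))).IsCycle := by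
    simp [Walk.isCycle_def, Sym2.eq, Sym2.rel_iff']
    grind [Adj.ne]
  have := hg.trans (egirth_le_length hcyc)
  norm_num at this

lemma false_of_pentagon (hg : 6 ≤ H.egirth) (hab : H.Adj a b) (hbc : H.Adj b c)
    (hcd : H.Adj c d) (hde : H.Adj d e) (hea : H.Adj e a)
    (hac : a ≠ c) (hbd : b ≠ d) (hce : c ≠ e) (hda : d ≠ a) (heb : e ≠ b) : False := by
  have hcyc : (Walk.cons hab (.cons hbc (.cons hcd (.cons hde (.cons hea .nil))))).IsCycle := by
    simp [Walk.isCycle_def, Sym2.eq, Sym2.rel_iff']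
    grind [Adj.ne]
  have := hg.trans (egirth_le_length hcyc)
  norm_num at this

lemma false_of_hexagon (hg : 7 ≤ H.egirth) (hab : H.Adj a b) (hbc : H.Adj b c)
    (hcd : H.Adj c d) (hde : H.Adj d e) (hef : H.Adj e f) (hfa : H.Adj f a)
    (hac : a ≠ c) (hbd : b ≠ d) (hce : c ≠ e) (hdf : d ≠ f) (hea : e ≠ a) (hfb : f ≠ b)
    (had : a ≠ d) (hbe : b ≠ e) (hcf : c ≠ f) : False := by
  have hcyc : (Walk.cons hab (.cons hbc (.cons hcd (.cons hde
      (.cons hef (.cons hfa .nil)))))).IsCycle := by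
    simp [Walk.isCycle_def, Sym2.eq, Sym2.rel_iff']
    grind [Adj.ne]
  have := hg.trans (egirth_le_length hcyc)
  norm_num at this

lemma mem_closedNeighborSet_of_adj_of_graphSq_adj (hg : 7 ≤ H.egirth) (hwx : H.Adj w x)
    (hwy : H.Adj w y) (hxy : x ≠ y) (hzx : H.Adj z x) (hzy : (graphSq H).Adj z y) :
    z ∈ H.closedNeighborSet w := by
  by_contra hzN
  simp only [mem_closedNeighborSet, not_or] at hzN
  obtain ⟨hzw, hwz⟩ := hzN
  obtain ⟨hzy_ne, hzy_adj | ⟨n, hzn, hny⟩⟩ := hzy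
  · exact hzw (commonNeighbors_subsingleton (hg.trans' (by norm_num)) hxy
      ⟨hzx.symm, hzy_adj.symm⟩ ⟨hwx.symm, hwy.symm⟩)
  have hwn : w ≠ n := by rintro rfl; exact hwz hzn.symm
  have hnx : n ≠ x := by
    rintro rfl
    exact false_of_triangle (hg.trans' (by norm_num)) hwx hny hwy.symm
  exact false_of_pentagon (hg.trans' (by norm_num)) hwx.symm hwy hny.symm hzn.symm hzx
    hxy hwn hzy_ne.symm hnx hzw

lemma subset_closedNeighborSet_of_isClique (hg : 7 ≤ H.egirth) {S : Set V}
    (hS : (graphSq H).IsClique S) (hwx : H.Adj w x) (hwy : H.Adj w y) (hxy : x ≠ y)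
    (hx : x ∈ S) (hy : y ∈ S) : S ⊆ H.closedNeighborSet w := by
  intro z hz
  by_contra hzN
  have hzx : z ≠ x := by rintro rfl; exact hzN (Or.inr hwx)
  have hzy : z ≠ y := by rintro rfl; exact hzN (Or.inr hwy)
  obtain ⟨-, hzx' | ⟨m, hzm, hmx⟩⟩ := hS hz hx hzx
  · exact hzN (mem_closedNeighborSet_of_adj_of_graphSq_adj hg hwx hwy hxy hzx' (hS hz hy hzy))
  obtain ⟨-, hzy' | ⟨n, hzn, hny⟩⟩ := hS hz hy hzy
  · exact hzN (mem_closedNeighborSet_of_adj_of_graphSq_adj hg hwy hwx hxy.symm hzy' (hS hz hx hzx))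
  simp only [mem_closedNeighborSet, not_or] at hzN
  obtain ⟨hzw, hwz⟩ := hzN
  have hmw : m ≠ w := by rintro rfl; exact hwz hzm.symm
  have hwn : w ≠ n := by rintro rfl; exact hwz hzn.symm
  have hnm : n ≠ m := by
    rintro rfl
    exact hmw (commonNeighbors_subsingleton (hg.trans' (by norm_num)) hxy
      ⟨hmx.symm, hny.symm⟩ ⟨hwx.symm, hwy.symm⟩)
  have hxn : x ≠ n := by
    rintro rfl
    exact false_of_triangle (hg.trans' (by norm_num)) hwx hny hwy.symm
  have hym : y ≠ m := by
    rintro rfl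
    exact false_of_triangle (hg.trans' (by norm_num)) hwy hmx hwx.symm
  exact false_of_hexagon hg hwx.symm hwy hny.symm hzn.symm hzm hmx hxy hwn hzy.symm hnm hzx
    hmw hxn (Ne.symm hzw) hym

lemma exists_subset_closedNeighborSet_of_isClique (hg : 7 ≤ H.egirth) {S : Set V}
    (hS : (graphSq H).IsClique S) (hx : x ∈ S) : ∃ c, S ⊆ H.closedNeighborSet c := by
  by_cases h : ∃ y ∈ S, ∃ z ∈ S, y ≠ z ∧ ∃ w, H.Adj w y ∧ H.Adj w z
  · obtain ⟨y, hy, z, hz, hyz, w, hwy, hwz⟩ := h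
    exact ⟨w, subset_closedNeighborSet_of_isClique hg hS hwy hwz hyz hy hz⟩
  refine ⟨x, fun z hz => ?_⟩
  rcases eq_or_ne z x with rfl | hzx
  · exact self_mem_closedNeighborSet z
  obtain ⟨-, hxz | ⟨w, hxw, hwz⟩⟩ := hS hx hz hzx.symm
  · exact Or.inr hxz
  · exact (h ⟨x, hx, z, hz, hzx.symm, w, hxw.symm, hwz⟩).elim

lemma IsMaxClique.exists_eq_closedNeighborSet [Nonempty V] (hg : 7 ≤ H.egirth) {Q : Set V}
    (hQ : IsMaxClique (graphSq H) Q) : ∃ c, Q = H.closedNeighborSet c := by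
  obtain ⟨x, hx⟩ : Q.Nonempty := by
    by_contra! rfl
    obtain ⟨v⟩ := ‹Nonempty V›
    simpa using hQ.2 {v} (Set.pairwise_singleton _ _) (Set.empty_subset _)
  obtain ⟨c, hc⟩ := exists_subset_closedNeighborSet_of_isClique hg hQ.1 hx
  exact ⟨c, (hQ.2 _ (isClique_closedNeighborSet c) hc).symm⟩

lemma isMaxClique_closedNeighborSet (hg : 7 ≤ H.egirth) (hc : (H.neighborSet c).Nontrivial) :
    IsMaxClique (graphSq H) (H.closedNeighborSet c) := by
  obtain ⟨x, hx, y, hy, hxy⟩ := hc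
  refine ⟨isClique_closedNeighborSet c, fun R hR hsub => ?_⟩
  exact (subset_closedNeighborSet_of_isClique hg hR hx hy hxy (hsub (Or.inr hx))
    (hsub (Or.inr hy))).antisymm hsub

lemma neighborSet_nontrivial_of_isMaxClique (hQ : IsMaxClique (graphSq H) (H.closedNeighborSet u))
    (huv : H.Adj u v) (hne : H.closedNeighborSet u ≠ H.closedNeighborSet v) :
    (H.neighborSet u).Nontrivial := by
  by_contra h
  rw [Set.not_nontrivial_iff] at h
  refine hne (hQ.2 _ (isClique_closedNeighborSet v) ?_).symm
  rintro z (rfl | hz)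
  · exact Or.inr huv.symm
  · rw [h hz huv]
    exact self_mem_closedNeighborSet v

lemma closedNeighborSet_ne (hg : 4 ≤ H.egirth) (huv : H.Adj u v) (hve : H.Adj v e)
    (heu : e ≠ u) : H.closedNeighborSet u ≠ H.closedNeighborSet v := by
  intro h
  obtain rfl | hue : e ∈ H.closedNeighborSet u := h ▸ Or.inr hve
  · exact heu rfl
  · exact false_of_triangle hg huv hve hue.symm

lemma eq_or_eq_of_mem_closedNeighborSet_inter (hg : 5 ≤ H.egirth) (hc : c ≠ d)
    (huc : u ∈ H.closedNeighborSet c) (hud : u ∈ H.closedNeighborSet d)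
    (hvc : v ∈ H.closedNeighborSet c) (hvd : v ∈ H.closedNeighborSet d) (huv : u ≠ v) :
    u = c ∨ u = d := by
  rcases huc with rfl | hcu
  · exact Or.inl rfl
  rcases hud with rfl | hdu
  · exact Or.inr rfl
  exfalso
  have hg' : 4 ≤ H.egirth := hg.trans' (by norm_num)
  rcases hvc with rfl | hcv
  · rcases hvd with rfl | hdv
    · exact hc rfl
    · exact false_of_triangle hg' hcu hdu.symm hdv
  rcases hvd with rfl | hdv
  · exact false_of_triangle hg' hcu hdu.symm hcv.symm
  exact huv (commonNeighbors_subsingleton hg hc ⟨hcu, hdu⟩ ⟨hcv, hdv⟩)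

lemma forcedSubgraph_graphSq_adj_iff (hg : 7 ≤ H.egirth) :
    (forcedSubgraph (graphSq H)).Adj u v ↔
      H.Adj u v ∧ (H.neighborSet u).Nontrivial ∧ (H.neighborSet v).Nontrivial := by
  constructor
  · rintro ⟨huv, Q₁, Q₂, hne, hQ₁, hQ₂, hu₁, hv₁, hu₂, hv₂⟩
    have : Nonempty V := ⟨u⟩
    obtain ⟨c, rfl⟩ := hQ₁.exists_eq_closedNeighborSet hg
    obtain ⟨d, rfl⟩ := hQ₂.exists_eq_closedNeighborSet hg
    have hcd : c ≠ d := by rintro rfl; exact hne rfl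
    have hg' : 5 ≤ H.egirth := hg.trans' (by norm_num)
    have hu := eq_or_eq_of_mem_closedNeighborSet_inter hg' hcd hu₁ hu₂ hv₁ hv₂ huv.ne
    have hv := eq_or_eq_of_mem_closedNeighborSet_inter hg' hcd hv₁ hv₂ hu₁ hu₂ huv.ne'
    rcases hu with rfl | rfl <;> rcases hv with rfl | rfl
    · exact absurd rfl huv.ne
    · have huv' : H.Adj u v := hv₁.resolve_left huv.ne'
      exact ⟨huv', neighborSet_nontrivial_of_isMaxClique hQ₁ huv' hne,
        neighborSet_nontrivial_of_isMaxClique hQ₂ huv'.symm hne.symm⟩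
    · have huv' : H.Adj u v := hv₂.resolve_left huv.ne'
      exact ⟨huv', neighborSet_nontrivial_of_isMaxClique hQ₂ huv' hne.symm,
        neighborSet_nontrivial_of_isMaxClique hQ₁ huv'.symm hne⟩
    · exact absurd rfl huv.ne
  · rintro ⟨huv, hu, hv⟩
    obtain ⟨e, hve, heu⟩ := hv.exists_ne u
    refine ⟨⟨huv.ne, Or.inl huv⟩, _, _,
      closedNeighborSet_ne (hg.trans' (by norm_num)) huv hve heu,
      isMaxClique_closedNeighborSet hg hu, isMaxClique_closedNeighborSet hg hv,
      self_mem_closedNeighborSet u, Or.inr huv, Or.inr huv.symm, self_mem_closedNeighborSet v⟩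

lemma exists_adj_adj_ne_of_graphSq_ne_top (hconn : H.Connected) (hnc : graphSq H ≠ ⊤) (c : V) :
    ∃ d e, H.Adj c d ∧ H.Adj d e ∧ e ≠ c := by
  by_contra! h
  refine hnc (isClique_univ.1 ?_)
  rw [← hconn.eq_univ_of_forall_adj_mem (self_mem_closedNeighborSet c) ?_]
  · exact isClique_closedNeighborSet c
  rintro x y (rfl | hcx) hxy
  · exact Or.inr hxy
  · exact Or.inl (h x y hcx hxy)

end SimpleGraph

theorem stmt4 (H : SimpleGraph V)
    (hconn : H.Connected) (hgirth : 7 ≤ H.girth) (hnc : graphSq H ≠ ⊤)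
    (Q : Set V) (hQ : IsMaxClique (graphSq H) Q) :
    IsStarOn (forcedSubgraph (graphSq H)) (Q ∩ (forcedSubgraph (graphSq H)).support) := by
  have hg : 7 ≤ H.egirth := (Nat.cast_le.2 hgirth).trans H.egirth.natCast_toNat_le_self
  have hF (u v : V) := forcedSubgraph_graphSq_adj_iff (u := u) (v := v) hg
  have := hconn.nonempty
  obtain ⟨c, rfl⟩ := hQ.exists_eq_closedNeighborSet hg
  obtain ⟨d, e, hcd, hde, hec⟩ := exists_adj_adj_ne_of_graphSq_ne_top hconn hnc c
  have hd : (H.neighborSet d).Nontrivial := ⟨c, hcd.symm, e, hde, hec.symm⟩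
  have hc : (H.neighborSet c).Nontrivial := neighborSet_nontrivial_of_isMaxClique hQ hcd
    (closedNeighborSet_ne (hg.trans' (by norm_num)) hcd hde hec)
  have hcdF := (hF c d).2 ⟨hcd, hc, hd⟩
  have hcS : c ∈ H.closedNeighborSet c ∩ (forcedSubgraph (graphSq H)).support :=
    ⟨self_mem_closedNeighborSet c, d, hcdF⟩
  refine ⟨⟨c, hcS, d, ⟨Or.inr hcd, c, hcdF.symm⟩, hcd.ne⟩, c, hcS, ?_, ?_⟩
  · rintro x ⟨hx, y, hxy⟩ hxc
    exact (hF c x).2 ⟨hx.resolve_left hxc, hc, ((hF x y).1 hxy).2.1⟩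
  · rintro x ⟨hx, -⟩ y ⟨hy, -⟩ hxc hyc - hxy
    exact false_of_triangle (hg.trans' (by norm_num)) (hx.resolve_left hxc) ((hF x y).1 hxy).1
      (hy.resolve_left hyc).symm
end

section
/- Let H be a graph with girth at least 7 and G = H² connected and not complete. Then any two forced edges of G sharing a common endpoint are contained in a common maximal clique of G. -/
open SimpleGraph

variable {V : Type*}

/-!
A forced edge of `H²` must be an edge of `H`: if `x` and `y` are at distance two in `H`, with
common neighbour `m`, then because `H` has no cycles of length 4, 5 or 6 every vertex within
distance two of both `x` and `y` lies in the closed neighbourhood `N[m]`. As `N[m]` is a clique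
of `H²`, it is the only maximal clique containing `x` and `y`. Two forced edges `xy`, `xz` are
therefore edges of `H`, and `N[x]` is a clique of `H²` containing `x`, `y` and `z`; any maximal
clique containing `N[x]` will do.
-/

namespace SimpleGraph

section ShortCycles

variable {H : SimpleGraph V}

lemma no_cycle_four_of_five_le_girth (hH : 5 ≤ H.girth) {a b c d : V} (hac : a ≠ c)
    (hbd : b ≠ d) (hab : H.Adj a b) (hbc : H.Adj b c) (hcd : H.Adj c d) (hda : H.Adj d a) :
    False := by
  have hcyc : (Walk.cons hab (.cons hbc (.cons hcd (.cons hda .nil)))).IsCycle := by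
    simp [Walk.cons_isCycle_iff, Walk.cons_isPath_iff, hab.ne', hbc.ne, hcd.ne, hda.ne,
      hda.ne', hac, hac.symm, hbd]
  simpa using hH.trans (girth_le_length hcyc)

lemma no_cycle_five_of_six_le_girth (hH : 6 ≤ H.girth) {a b c d e : V} (hac : a ≠ c)
    (had : a ≠ d) (hbd : b ≠ d) (hbe : b ≠ e) (hce : c ≠ e) (hab : H.Adj a b)
    (hbc : H.Adj b c) (hcd : H.Adj c d) (hde : H.Adj d e) (hea : H.Adj e a) : False := by
  have hcyc : (Walk.cons hab (.cons hbc (.cons hcd (.cons hde (.cons hea .nil))))).IsCycle := by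
    simp [Walk.cons_isCycle_iff, Walk.cons_isPath_iff, hab.ne', hbc.ne, hcd.ne, hde.ne, hea.ne,
      hea.ne', hac, hac.symm, had, had.symm, hbd, hbe, hce]
  simpa using hH.trans (girth_le_length hcyc)

lemma no_cycle_six_of_seven_le_girth (hH : 7 ≤ H.girth) {a b c d e f : V} (hac : a ≠ c)
    (had : a ≠ d) (hae : a ≠ e) (hbd : b ≠ d) (hbe : b ≠ e) (hbf : b ≠ f) (hce : c ≠ e)
    (hcf : c ≠ f) (hdf : d ≠ f) (hab : H.Adj a b) (hbc : H.Adj b c) (hcd : H.Adj c d)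
    (hde : H.Adj d e) (hef : H.Adj e f) (hfa : H.Adj f a) : False := by
  have hcyc : (Walk.cons hab (.cons hbc (.cons hcd (.cons hde (.cons hef
      (.cons hfa .nil)))))).IsCycle := by
    simp [Walk.cons_isCycle_iff, Walk.cons_isPath_iff, hab.ne', hbc.ne, hcd.ne, hde.ne, hef.ne,
      hfa.ne, hfa.ne', hac, hac.symm, had, had.symm, hae, hae.symm, hbd, hbe, hbf, hce, hcf, hdf]
  simpa using hH.trans (girth_le_length hcyc)

end ShortCycles

lemma graphSq_isClique_insert_neighborSet (H : SimpleGraph V) (m : V) :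
    (graphSq H).IsClique (insert m (H.neighborSet m)) := by
  rintro u (rfl | hu) v (rfl | hv) huv
  · exact (huv rfl).elim
  · exact ⟨huv, .inl hv⟩
  · exact ⟨huv, .inl (H.adj_symm hu)⟩
  · exact ⟨huv, .inr ⟨m, H.adj_symm hu, hv⟩⟩

lemma mem_insert_neighborSet_of_graphSq_adj {H : SimpleGraph V} (hH : 7 ≤ H.girth)
    {x y m w : V} (hxy : ¬H.Adj x y) (hne : x ≠ y) (hxm : H.Adj x m) (hmy : H.Adj m y)
    (hwx : (graphSq H).Adj w x) (hwy : (graphSq H).Adj w y) :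
    w ∈ insert m (H.neighborSet m) := by
  obtain rfl | hwm := eq_or_ne w m
  · exact Set.mem_insert w _
  refine Or.inr ?_
  obtain ⟨hwx, hwx' | ⟨a, hwa, hax⟩⟩ := hwx <;> obtain ⟨hwy, hwy' | ⟨b, hwb, hby⟩⟩ := hwy
  · exact (no_cycle_four_of_five_le_girth (by omega) hwm hne hwx' hxm hmy hwy'.symm).elim
  · obtain rfl | hbm := eq_or_ne b m
    · exact hwb.symm
    have hbx : b ≠ x := fun h => hxy (h ▸ hby)
    exact (no_cycle_five_of_six_le_girth (by omega) hwm hwy hne hbx.symm hbm.symm hwx' hxm hmy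
      hby.symm hwb.symm).elim
  · obtain rfl | ham := eq_or_ne a m
    · exact hwa.symm
    have hay : a ≠ y := fun h => hxy (h ▸ hax).symm
    exact (no_cycle_five_of_six_le_girth (by omega) hwm hwx hne.symm hay.symm ham.symm hwy'
      hmy.symm hxm.symm hax.symm hwa.symm).elim
  · obtain rfl | ham := eq_or_ne a m
    · exact hwa.symm
    obtain rfl | hbm := eq_or_ne b m
    · exact hwb.symm
    have hay : a ≠ y := fun h => hxy (h ▸ hax).symm
    have hbx : b ≠ x := fun h => hxy (h ▸ hby)
    obtain rfl | hab := eq_or_ne a b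
    · exact (no_cycle_four_of_five_le_girth (by omega) hne ham.symm hxm hmy hby.symm hax).elim
    exact (no_cycle_six_of_seven_le_girth hH hwx hwm hwy ham hay hab hne hbx.symm hbm.symm hwa
      hax hxm hmy hby.symm hwb.symm).elim

lemma IsClique.exists_isMaxClique_superset {G : SimpleGraph V} {S : Set V} (hS : G.IsClique S) :
    ∃ Q, IsMaxClique G Q ∧ S ⊆ Q := by
  obtain ⟨Q, hSQ, hQ⟩ := zorn_subset_nonempty {R | G.IsClique R}
    (fun c hc hchain _ => ⟨⋃₀ c, (isClique_sUnion hchain.directedOn).2 hc,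
      fun _ => Set.subset_sUnion_of_mem⟩) S hS
  exact ⟨Q, ⟨hQ.prop, fun R hR hQR => (hQ.eq_of_subset hR hQR).symm⟩, hSQ⟩

lemma adj_of_forced_graphSq {H : SimpleGraph V} (hH : 7 ≤ H.girth) {x y : V}
    (hf : Forced (graphSq H) x y) : H.Adj x y := by
  obtain ⟨⟨hne, hxy | ⟨m, hxm, hmy⟩⟩, Q₁, Q₂, hQ, hQ₁, hQ₂, hx₁, hy₁, hx₂, hy₂⟩ := hf
  · exact hxy
  by_contra hxy
  suffices ∀ Q, IsMaxClique (graphSq H) Q → x ∈ Q → y ∈ Q → Q = insert m (H.neighborSet m) from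
    hQ ((this Q₁ hQ₁ hx₁ hy₁).trans (this Q₂ hQ₂ hx₂ hy₂).symm)
  intro Q hQ hx hy
  refine (hQ.2 _ (graphSq_isClique_insert_neighborSet H m) fun w hw => ?_).symm
  obtain rfl | hwx := eq_or_ne w x
  · exact Or.inr hxm.symm
  obtain rfl | hwy := eq_or_ne w y
  · exact Or.inr hmy
  exact mem_insert_neighborSet_of_graphSq_adj hH hxy hne hxm hmy (hQ.1 hw hx hwx) (hQ.1 hw hy hwy)

end SimpleGraph

theorem stmt7_general (H : SimpleGraph V)
    (hgirth : 7 ≤ H.girth)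
    (x y z : V) (h1 : (forcedSubgraph (graphSq H)).Adj x y)
    (h2 : (forcedSubgraph (graphSq H)).Adj x z) :
    ∃ Q : Set V, IsMaxClique (graphSq H) Q ∧ x ∈ Q ∧ y ∈ Q ∧ z ∈ Q := by
  obtain ⟨Q, hQ, hNQ⟩ := (graphSq_isClique_insert_neighborSet H x).exists_isMaxClique_superset
  exact ⟨Q, hQ, hNQ (Set.mem_insert x _), hNQ (Or.inr (adj_of_forced_graphSq hgirth h1)),
    hNQ (Or.inr (adj_of_forced_graphSq hgirth h2))⟩

theorem stmt7 (H : SimpleGraph V)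
    (hgirth : 7 ≤ H.girth) (hconn : (graphSq H).Connected) (hnc : graphSq H ≠ ⊤)
    (x y z : V) (h1 : (forcedSubgraph (graphSq H)).Adj x y)
    (h2 : (forcedSubgraph (graphSq H)).Adj x z) :
    ∃ Q : Set V, IsMaxClique (graphSq H) Q ∧ x ∈ Q ∧ y ∈ Q ∧ z ∈ Q :=
  stmt7_general H hgirth x y z h1 h2
end

section
/- Let G be a graph containing vertices a, b, c, d such that: the only neighbors of a in G are b and c; the only neighbors of b in G are a, c, d; and c is adjacent to d in G. Then for any graph H with H² = G, the set of neighbors of d in H outside {a,b,c} equals the set of neighbors of c in G outside {a,b,d}. -/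
/-!
Every `H`-neighbour of `a` lies in `N_G(a) = {b, c}` and every `H`-neighbour of `b` in
`N_G(b) = {a, c, d}`, so any vertex `x` outside `{a, b, c, d}` is at `H`-distance at least 3
from both `a` and `b`. As `c` is an `H`-neighbour of `a` or of `b`, such an `x` is not an
`H`-neighbour of `c`, so a `G`-edge `cx` is an `H`-path `c z x` through some `z ∈ {a, b, c, d}`,
and the only possibility is `z = d`. Conversely, if `dx` is an `H`-edge then `b` and `d` are not
`H`-adjacent, so the `G`-edge `bd` comes from an `H`-path `b c d`, and `c d x` gives `cx ∈ G`.
-/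

open SimpleGraph

variable {V : Type*}

namespace graphSq

variable {H : SimpleGraph V} {u w x : V}

theorem le_self : H ≤ graphSq H :=
  fun _ _ h => ⟨h.ne, Or.inl h⟩

theorem adj_of_adj_of_adj (huw : H.Adj u w) (hwx : H.Adj w x) (hux : u ≠ x) :
    (graphSq H).Adj u x :=
  ⟨hux, Or.inr ⟨w, huw, hwx⟩⟩

theorem eq_or_adj_of_adj_of_adj (huw : H.Adj u w) (hwx : H.Adj w x) :
    x = u ∨ (graphSq H).Adj u x := by
  by_cases hxu : x = u
  · exact Or.inl hxu
  · exact Or.inr (adj_of_adj_of_adj huw hwx (Ne.symm hxu))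

end graphSq

section Configuration

variable {H : SimpleGraph V} {a b c d x : V}

theorem mem_of_eq_or_graphSq_adj (ha : (graphSq H).neighborSet a = {b, c})
    (hb : (graphSq H).neighborSet b = {a, c, d}) {u : V} (hu : u = a ∨ u = b)
    (hux : x = u ∨ (graphSq H).Adj u x) : x ∈ ({a, b, c, d} : Set V) := by
  rcases hux with rfl | h
  · rcases hu with rfl | rfl <;> simp
  · rcases hu with rfl | rfl
    · have hx : x ∈ ({b, c} : Set V) := ha ▸ h
      simp only [Set.mem_insert_iff, Set.mem_singleton_iff] at hx ⊢
      tauto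
    · have hx : x ∈ ({a, c, d} : Set V) := hb ▸ h
      simp only [Set.mem_insert_iff, Set.mem_singleton_iff] at hx ⊢
      tauto

theorem exists_adj_of_graphSq_adj (ha : (graphSq H).neighborSet a = {b, c})
    (hac : (graphSq H).Adj a c) : ∃ u, (u = a ∨ u = b) ∧ H.Adj u c := by
  rcases hac.2 with h | ⟨z, haz, hzc⟩
  · exact ⟨a, Or.inl rfl, h⟩
  · have hz : z ∈ ({b, c} : Set V) := ha ▸ graphSq.le_self haz
    simp only [Set.mem_insert_iff, Set.mem_singleton_iff] at hz
    rcases hz with rfl | rfl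
    · exact ⟨z, Or.inr rfl, hzc⟩
    · exact absurd hzc (H.loopless.irrefl _)

theorem not_adj_of_not_mem (ha : (graphSq H).neighborSet a = {b, c})
    (hb : (graphSq H).neighborSet b = {a, c, d}) (hx : x ∉ ({a, b, c, d} : Set V))
    {u w : V} (hu : u = a ∨ u = b) (hw : w = u ∨ H.Adj u w) : ¬H.Adj w x := by
  intro hwx
  refine hx (mem_of_eq_or_graphSq_adj ha hb hu ?_)
  rcases hw with rfl | huw
  · exact Or.inr (graphSq.le_self hwx)
  · exact graphSq.eq_or_adj_of_adj_of_adj huw hwx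

theorem adj_of_graphSq_adj_of_not_mem (ha : (graphSq H).neighborSet a = {b, c})
    (hb : (graphSq H).neighborSet b = {a, c, d}) (hx : x ∉ ({a, b, c, d} : Set V))
    (hcx : (graphSq H).Adj c x) : H.Adj d x := by
  obtain ⟨u, hu, huc⟩ :=
    exists_adj_of_graphSq_adj ha (by simp [← mem_neighborSet, ha] : (graphSq H).Adj a c)
  rcases hcx.2 with hcx' | ⟨z, hcz, hzx⟩
  · exact absurd hcx' (not_adj_of_not_mem ha hb hx hu (Or.inr huc))
  · have hz := mem_of_eq_or_graphSq_adj ha hb hu (graphSq.eq_or_adj_of_adj_of_adj huc hcz)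
    simp only [Set.mem_insert_iff, Set.mem_singleton_iff] at hz
    rcases hz with rfl | rfl | rfl | rfl
    · exact absurd hzx (not_adj_of_not_mem ha hb hx (Or.inl rfl) (Or.inl rfl))
    · exact absurd hzx (not_adj_of_not_mem ha hb hx (Or.inr rfl) (Or.inl rfl))
    · exact absurd hcz (H.loopless.irrefl _)
    · exact hzx

theorem adj_of_adj_of_not_mem (ha : (graphSq H).neighborSet a = {b, c})
    (hb : (graphSq H).neighborSet b = {a, c, d}) (hx : x ∉ ({a, b, c, d} : Set V))
    (hdx : H.Adj d x) : H.Adj c d := by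
  have hbd : (graphSq H).Adj b d := by simp [← mem_neighborSet, hb]
  rcases hbd.2 with hbd' | ⟨z, hbz, hzd⟩
  · exact absurd hdx (not_adj_of_not_mem ha hb hx (Or.inr rfl) (Or.inr hbd'))
  · have hz : z ∈ ({a, c, d} : Set V) := hb ▸ graphSq.le_self hbz
    simp only [Set.mem_insert_iff, Set.mem_singleton_iff] at hz
    rcases hz with rfl | rfl | rfl
    · exact absurd hdx (not_adj_of_not_mem ha hb hx (Or.inl rfl) (Or.inr hzd))
    · exact hzd
    · exact absurd hzd (H.loopless.irrefl _)

end Configuration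

theorem stmt13_general (G : SimpleGraph V) (a b c d : V)
    (ha : G.neighborSet a = {b, c}) (hb : G.neighborSet b = {a, c, d}) :
    ∀ H : SimpleGraph V, graphSq H = G →
      H.neighborSet d \ {a, b, c} = G.neighborSet c \ {a, b, d} := by
  rintro H rfl
  ext x
  simp only [Set.mem_sdiff, mem_neighborSet, Set.mem_insert_iff, Set.mem_singleton_iff, not_or]
  constructor
  · rintro ⟨hdx, hxa, hxb, hxc⟩
    have hx : x ∉ ({a, b, c, d} : Set V) := by simp [hxa, hxb, hxc, hdx.ne']
    have hcd := adj_of_adj_of_not_mem ha hb hx hdx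
    exact ⟨graphSq.adj_of_adj_of_adj hcd hdx (Ne.symm hxc), hxa, hxb, hdx.ne'⟩
  · rintro ⟨hcx, hxa, hxb, hxd⟩
    have hx : x ∉ ({a, b, c, d} : Set V) := by simp [hxa, hxb, hcx.ne', hxd]
    exact ⟨adj_of_graphSq_adj_of_not_mem ha hb hx hcx, hxa, hxb, hcx.ne'⟩

theorem stmt13 (G : SimpleGraph V) (a b c d : V)
    (ha : G.neighborSet a = {b, c}) (hb : G.neighborSet b = {a, c, d})
    (hcd : G.Adj c d) :
    ∀ H : SimpleGraph V, graphSq H = G →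
      H.neighborSet d \ {a, b, c} = G.neighborSet c \ {a, b, d} :=
  stmt13_general G a b c d ha hb
end
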